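/- In dimension n = 3, the function J(λ) = sin(λ)/λ satisfies: the consistency equation λ cot λ = (6 - 2λ²)/(6 - λ²) has exactly one solution λ₀ in the open interval (0, √6). -/

import Mathlib

/-!
Clearing denominators, the equation on `(0, √6)` (where `sin λ > 0` and `6 - λ² > 0`) says
`F λ = 0` for `F x = x cos x (6 - x²) - sin x (6 - 2x²)`. Since `F 1 < 0 < F √6`, a root exists.
For uniqueness, `(F x / x³)' = (x F' x - 3 F x) / x⁴`, and
`x F' x - 3 F x = (x⁴ - 8x² + 18) sin x - (18x - 2x³) cos x`. Both polynomial coefficients are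
positive for `0 < x < 3`, so the Taylor bounds `sin x ≥ x - x³/6` and `cos x ≤ 1 - x²/2 + x⁴/24`
bound it below by `x⁵ (7 - x²) / 12 > 0`. Hence `F x / x³` is strictly increasing on `(0, √7)`
and vanishes at most once.
-/

open Set

namespace Real

theorem cos_le_one_sub_sq_div_two_add_pow_four_div (x : ℝ) :
    cos x ≤ 1 - x ^ 2 / 2 + x ^ 4 / 24 := by
  let g : ℝ → ℝ := fun y => 1 - y ^ 2 / 2 + y ^ 4 / 24 - cos y
  have hg : ∀ y, HasDerivAt g (-y + y ^ 3 / 6 + sin y) y := fun y => by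
    refine ((((hasDerivAt_pow 2 y).div_const 2).const_sub 1).fun_add
      ((hasDerivAt_pow 4 y).div_const 24)).fun_sub (hasDerivAt_cos y) |>.congr_deriv ?_
    norm_num
    ring
  have hmono : MonotoneOn g (Ici 0) := by
    refine monotoneOn_of_hasDerivWithinAt_nonneg (convex_Ici 0)
      (fun y _ => (hg y).continuousAt.continuousWithinAt) (fun y _ => (hg y).hasDerivWithinAt)
      fun y hy => ?_
    rw [interior_Ici] at hy
    linarith [sin_ge_sub_cube (le_of_lt hy)]
  have h := hmono self_mem_Ici (abs_nonneg x) (abs_nonneg x)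
  simp only [g, cos_abs, sq_abs, Even.pow_abs (by decide : Even 4)] at h
  norm_num at h
  linarith

theorem sqrt_six_lt_pi : √6 < π := by
  have : √6 < 3 := by rw [sqrt_lt' (by norm_num)]; norm_num
  linarith [pi_gt_three]

end Real

open Real

/-- `λ cot λ - (6 - 2λ²)/(6 - λ²)`, multiplied by `sin λ (6 - λ²)`. -/
noncomputable def consistencyDefect (x : ℝ) : ℝ :=
  x * cos x * (6 - x ^ 2) - sin x * (6 - 2 * x ^ 2)

theorem continuous_consistencyDefect : Continuous consistencyDefect := by
  unfold consistencyDefect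
  fun_prop

theorem hasDerivAt_consistencyDefect (x : ℝ) :
    HasDerivAt consistencyDefect ((x ^ 3 - 2 * x) * sin x - x ^ 2 * cos x) x := by
  unfold consistencyDefect
  refine (((hasDerivAt_id' x).fun_mul (hasDerivAt_cos x)).fun_mul
    ((hasDerivAt_pow 2 x).const_sub 6)).fun_sub
    ((hasDerivAt_sin x).fun_mul (((hasDerivAt_pow 2 x).const_mul 2).const_sub 6))
    |>.congr_deriv ?_
  norm_num
  ring

theorem consistency_iff_consistencyDefect_eq_zero {x : ℝ} (hsin : sin x ≠ 0)
    (hx : 6 - x ^ 2 ≠ 0) :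
    x * (cos x / sin x) = (6 - 2 * x ^ 2) / (6 - x ^ 2) ↔ consistencyDefect x = 0 := by
  rw [mul_div_assoc', div_eq_div_iff hsin hx, consistencyDefect, sub_eq_zero]
  constructor <;> intro h <;> linarith

theorem exists_consistencyDefect_eq_zero : ∃ x ∈ Ioo 1 √6, consistencyDefect x = 0 := by
  have hsqrt6 : 1 < √6 := by rw [lt_sqrt zero_le_one]; norm_num
  have hleft : consistencyDefect 1 < 0 := by
    have hcos := cos_le_one_sub_sq_div_two_add_pow_four_div 1
    have hsin := sin_ge_sub_cube zero_le_one
    norm_num [consistencyDefect] at hcos hsin ⊢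
    linarith
  have hright : 0 < consistencyDefect √6 := by
    have hsin := sin_pos_of_pos_of_lt_pi (zero_lt_one.trans hsqrt6) sqrt_six_lt_pi
    simp only [consistencyDefect, sq_sqrt (by norm_num : (0 : ℝ) ≤ 6)]
    linarith
  exact intermediate_value_Ioo hsqrt6.le continuous_consistencyDefect.continuousOn
    ⟨hleft, hright⟩

theorem three_mul_consistencyDefect_lt_mul_deriv {x : ℝ} (hx : 0 < x) (hx7 : x ^ 2 < 7) :
    3 * consistencyDefect x < x * deriv consistencyDefect x := by
  rw [(hasDerivAt_consistencyDefect x).deriv, ← sub_pos]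
  have hP : 0 ≤ x ^ 4 - 8 * x ^ 2 + 18 := by nlinarith [sq_nonneg (x ^ 2 - 4)]
  have hQ : 0 ≤ 18 * x - 2 * x ^ 3 := by nlinarith
  have hsin := mul_le_mul_of_nonneg_left (sin_ge_sub_cube hx.le) hP
  have hcos := mul_le_mul_of_nonneg_left (cos_le_one_sub_sq_div_two_add_pow_four_div x) hQ
  have hpoly : 0 < x ^ 5 * (7 - x ^ 2) / 12 := by
    have := pow_pos hx 5
    have : 0 < 7 - x ^ 2 := by linarith
    positivity
  calc 0 < x ^ 5 * (7 - x ^ 2) / 12 := hpoly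
    _ = (x ^ 4 - 8 * x ^ 2 + 18) * (x - x ^ 3 / 6)
          - (18 * x - 2 * x ^ 3) * (1 - x ^ 2 / 2 + x ^ 4 / 24) := by ring
    _ ≤ (x ^ 4 - 8 * x ^ 2 + 18) * sin x - (18 * x - 2 * x ^ 3) * cos x := by linarith
    _ = _ := by rw [consistencyDefect]; ring

theorem strictMonoOn_consistencyDefect_div_cube :
    StrictMonoOn (fun x => consistencyDefect x / x ^ 3) (Ioo 0 √7) := by
  have hF (x : ℝ) : HasDerivAt consistencyDefect (deriv consistencyDefect x) x :=
    (hasDerivAt_consistencyDefect x).differentiableAt.hasDerivAt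
  refine strictMonoOn_of_hasDerivWithinAt_pos (convex_Ioo 0 √7)
    (fun x hx => ((hF x).continuousAt.div (continuous_pow 3).continuousAt
      (pow_ne_zero 3 hx.1.ne')).continuousWithinAt)
    (fun x hx => ((hF x).div (hasDerivAt_pow 3 x)
      (pow_ne_zero 3 (interior_subset hx).1.ne')).hasDerivWithinAt) fun x hx => ?_
  rw [interior_Ioo] at hx
  have hx0 : x ≠ 0 := hx.1.ne'
  have hderiv := three_mul_consistencyDefect_lt_mul_deriv hx.1 ((lt_sqrt hx.1.le).mp hx.2)
  refine (div_pos (sub_pos.mpr hderiv) (pow_pos hx.1 4)).trans_eq ?_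
  field_simp
  ring

/-- the consistency equation `λ cot λ = (6 - 2λ²)/(6 - λ²)` arising from
the Robin eigenvalue problem for the weighted Nash inequality in `ℝ³` has exactly one
solution `λ₀` in the open interval `(0, √6)`. -/
theorem robin_consistency_unique_solution :
    ∃! lam : ℝ, lam ∈ Ioo (0 : ℝ) (Real.sqrt 6) ∧
      lam * (Real.cos lam / Real.sin lam) =
        (6 - 2 * lam ^ 2) / (6 - lam ^ 2) := by
  have hiff : ∀ x ∈ Ioo 0 √6, x * (cos x / sin x) = (6 - 2 * x ^ 2) / (6 - x ^ 2) ↔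
      consistencyDefect x = 0 := fun x hx =>
    consistency_iff_consistencyDefect_eq_zero
      (sin_pos_of_pos_of_lt_pi hx.1 (hx.2.trans sqrt_six_lt_pi)).ne'
      (sub_pos.mpr ((lt_sqrt hx.1.le).mp hx.2)).ne'
  have hsub : Ioo 0 √6 ⊆ Ioo 0 √7 := Ioo_subset_Ioo_right (sqrt_le_sqrt (by norm_num))
  obtain ⟨c, hc, hFc⟩ := exists_consistencyDefect_eq_zero
  have hc' : c ∈ Ioo 0 √6 := ⟨zero_lt_one.trans hc.1, hc.2⟩
  refine ⟨c, ⟨hc', (hiff c hc').mpr hFc⟩, fun x ⟨hx, hxeq⟩ => ?_⟩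
  refine strictMonoOn_consistencyDefect_div_cube.injOn (hsub hx) (hsub hc') ?_
  simp only [(hiff x hx).mp hxeq, hFc, zero_div]
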